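/- arXiv:1212.5900 — 2 statements merged into one kernel-verified Lean document; each statement's English description precedes it below -/
import Mathlib

section
/- Let (X, C) be a uniformly locally finite coarse space. If (X, C) does not have property A, then there exists a single controlled set T ∈ C such that the coarse space (X, C_T) with the coarse structure generated by T does not have property A. -/
structure CoarseStructure (X : Type*) where
  sets : Set (Set (X × X))
  diagonal_mem : {p : X × X | p.1 = p.2} ∈ sets
  inv_mem : ∀ T ∈ sets, {p : X × X | (p.2, p.1) ∈ T} ∈ sets
  comp_mem : ∀ T₁ ∈ sets, ∀ T₂ ∈ sets,
    {p : X × X | ∃ z, (p.1, z) ∈ T₁ ∧ (z, p.2) ∈ T₂} ∈ sets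
  union_mem : ∀ T₁ ∈ sets, ∀ T₂ ∈ sets, T₁ ∪ T₂ ∈ sets
  subset_mem : ∀ T₁ T₂ : Set (X × X), T₁ ⊆ T₂ → T₂ ∈ sets → T₁ ∈ sets

def IsULF {X : Type*} (C : CoarseStructure X) : Prop :=
  ∀ T ∈ C.sets, (∀ x : X, {y | (y, x) ∈ T}.Finite) ∧
    ∃ m : ℕ, ∀ x : X, {y | (y, x) ∈ T}.ncard ≤ m

/-- Property A: for every `ε > 0` and controlled `T` there is an assignment of unit
vectors `η_x ∈ ℓ²X` whose joint support is controlled and with `‖η_x − η_y‖ < ε` for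
`(x,y) ∈ T`. -/
def HasPropertyA {X : Type*} (C : CoarseStructure X) : Prop :=
  ∀ ε : ℝ, 0 < ε → ∀ T ∈ C.sets,
    ∃ η : X → lp (fun _ : X => ℂ) 2,
      (∀ x : X, ‖η x‖ = 1) ∧
      {p : X × X | (η p.1 : ∀ _ : X, ℂ) p.2 ≠ 0} ∈ C.sets ∧
      ∀ p ∈ T, ‖η p.1 - η p.2‖ < ε

def relComp {X : Type*} (T₁ T₂ : Set (X × X)) : Set (X × X) :=
  {p | ∃ z, (p.1, z) ∈ T₁ ∧ (z, p.2) ∈ T₂}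

def relInv {X : Type*} (T : Set (X × X)) : Set (X × X) :=
  {p | (p.2, p.1) ∈ T}

/-- `n`-fold composition powers of a relation (with the diagonal as the 0-th power). -/
def compPow {X : Type*} (T : Set (X × X)) : ℕ → Set (X × X)
  | 0 => {p : X × X | p.1 = p.2}
  | n + 1 => relComp T (compPow T n)

section Aux

variable {X : Type*}

lemma relComp_assoc (A B D : Set (X × X)) :
    relComp (relComp A B) D = relComp A (relComp B D) := by
  ext ⟨x, y⟩
  constructor
  · rintro ⟨z, ⟨w, hw1, hw2⟩, hz⟩; exact ⟨w, hw1, z, hw2, hz⟩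
  · rintro ⟨w, hw, z, hz1, hz2⟩; exact ⟨z, ⟨w, hw, hz1⟩, hz2⟩

lemma relComp_diag_left (A : Set (X × X)) :
    relComp {p : X × X | p.1 = p.2} A = A := by
  ext ⟨x, y⟩
  constructor
  · rintro ⟨z, hz, h⟩
    simp only [Set.mem_setOf_eq] at hz
    rwa [hz]
  · intro h; exact ⟨x, rfl, h⟩

lemma relComp_diag_right (A : Set (X × X)) :
    relComp A {p : X × X | p.1 = p.2} = A := by
  ext ⟨x, y⟩
  constructor
  · rintro ⟨z, hz, h⟩
    simp only [Set.mem_setOf_eq] at h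
    rwa [← h]
  · intro h; exact ⟨y, h, rfl⟩

lemma relInv_relComp (A B : Set (X × X)) :
    relInv (relComp A B) = relComp (relInv B) (relInv A) := by
  ext ⟨x, y⟩
  constructor
  · rintro ⟨z, h1, h2⟩; exact ⟨z, h2, h1⟩
  · rintro ⟨z, h1, h2⟩; exact ⟨z, h2, h1⟩

lemma compPow_succ_right (S : Set (X × X)) (n : ℕ) :
    compPow S (n + 1) = relComp (compPow S n) S := by
  induction n with
  | zero =>
      show relComp S (compPow S 0) = relComp (compPow S 0) S
      rw [show compPow S 0 = {p : X × X | p.1 = p.2} from rfl,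
        relComp_diag_right, relComp_diag_left]
  | succ n ih =>
      conv_lhs => rw [show compPow S (n + 1 + 1) = relComp S (compPow S (n + 1)) from rfl, ih]
      rw [← relComp_assoc]
      rfl

lemma compPow_add (S : Set (X × X)) (n m : ℕ) :
    compPow S (n + m) = relComp (compPow S n) (compPow S m) := by
  induction n with
  | zero =>
      simp only [Nat.zero_add]
      rw [show compPow S 0 = {p : X × X | p.1 = p.2} from rfl, relComp_diag_left]
  | succ n ih =>
      have : n + 1 + m = (n + m) + 1 := by omega
      rw [this]
      show relComp S (compPow S (n + m)) = relComp (relComp S (compPow S n)) (compPow S m)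
      rw [ih, relComp_assoc]

lemma compPow_mono (S : Set (X × X)) (hdiag : {p : X × X | p.1 = p.2} ⊆ S)
    {n m : ℕ} (h : n ≤ m) : compPow S n ⊆ compPow S m := by
  induction m with
  | zero => rw [Nat.le_zero.mp h]
  | succ m ih =>
      rcases Nat.lt_or_ge n (m + 1) with h' | h'
      · refine (ih (by omega)).trans ?_
        intro p hp
        exact ⟨p.1, hdiag rfl, hp⟩
      · rw [Nat.le_antisymm h h']

lemma relInv_compPow (S : Set (X × X)) (hS : relInv S = S) (n : ℕ) :
    relInv (compPow S n) = compPow S n := by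
  induction n with
  | zero =>
      ext ⟨x, y⟩
      simp only [relInv, compPow, Set.mem_setOf_eq]
      exact eq_comm
  | succ n ih =>
      show relInv (relComp S (compPow S n)) = _
      rw [relInv_relComp, ih, hS, ← compPow_succ_right]

lemma compPow_mem {C : CoarseStructure X} {S : Set (X × X)} (hS : S ∈ C.sets) (n : ℕ) :
    compPow S n ∈ C.sets := by
  induction n with
  | zero => exact C.diagonal_mem
  | succ n ih => exact C.comp_mem S hS (compPow S n) ih

end Aux

/-- If a uniformly locally finite coarse space does not have property A, then there is
a single controlled set `T` such that the coarse structure generated by `T` (namely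
`{F : ∃ n, F ⊆ (T⁻¹ ∪ T)^(∘n)}`) does not have property A. -/
theorem exists_singly_generated_without_A {X : Type*} (C : CoarseStructure X)
    (hULF : IsULF C) (hA : ¬ HasPropertyA C) :
    ∃ T ∈ C.sets, ∃ CT : CoarseStructure X,
      CT.sets = {F : Set (X × X) | ∃ n : ℕ, F ⊆ compPow (relInv T ∪ T) n} ∧
      ¬ HasPropertyA CT := by
  simp only [HasPropertyA, not_forall] at hA
  obtain ⟨ε, hε, T₀, hT₀, hfail⟩ := hA
  -- enlarge T₀ to contain the diagonal
  set T : Set (X × X) := T₀ ∪ {p : X × X | p.1 = p.2} with hTdef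
  have hT : T ∈ C.sets := C.union_mem T₀ hT₀ _ C.diagonal_mem
  set S : Set (X × X) := relInv T ∪ T with hSdef
  have hSsymm : relInv S = S := by
    ext ⟨x, y⟩
    simp only [hSdef, relInv, Set.mem_union, Set.mem_setOf_eq]
    tauto
  have hdiagS : {p : X × X | p.1 = p.2} ⊆ S := fun p hp =>
    Or.inr (Or.inr hp)
  have hSC : S ∈ C.sets := C.union_mem _ (C.inv_mem T hT) T hT
  refine ⟨T, hT, ⟨{F : Set (X × X) | ∃ n : ℕ, F ⊆ compPow S n}, ?_, ?_, ?_, ?_, ?_⟩, rfl, ?_⟩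
  · exact ⟨0, subset_rfl⟩
  · rintro F ⟨n, hFn⟩
    refine ⟨n, ?_⟩
    intro p hp
    have : (p.2, p.1) ∈ compPow S n := hFn hp
    have : p ∈ relInv (compPow S n) := this
    rwa [relInv_compPow S hSsymm n] at this
  · rintro F₁ ⟨n, hn⟩ F₂ ⟨m, hm⟩
    refine ⟨n + m, ?_⟩
    rintro p ⟨z, hz1, hz2⟩
    rw [compPow_add]
    exact ⟨z, hn hz1, hm hz2⟩
  · rintro F₁ ⟨n, hn⟩ F₂ ⟨m, hm⟩
    refine ⟨max n m, ?_⟩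
    rintro p (hp | hp)
    · exact compPow_mono S hdiagS (le_max_left n m) (hn hp)
    · exact compPow_mono S hdiagS (le_max_right n m) (hm hp)
  · rintro F₁ F₂ hsub ⟨n, hn⟩
    exact ⟨n, hsub.trans hn⟩
  · -- CT does not have property A
    intro hCT
    have hT₀mem : T₀ ∈ {F : Set (X × X) | ∃ n : ℕ, F ⊆ compPow S n} := by
      refine ⟨1, ?_⟩
      intro p hp
      exact ⟨p.2, Or.inr (Or.inl hp), rfl⟩
    obtain ⟨η, hnorm, hsupp, hclose⟩ := hCT ε hε T₀ hT₀mem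
    obtain ⟨n, hn⟩ := hsupp
    have : {p : X × X | (η p.1 : ∀ _ : X, ℂ) p.2 ≠ 0} ∈ C.sets :=
      C.subset_mem _ _ hn (compPow_mem hSC n)
    exact hfail ⟨η, hnorm, this, hclose⟩
end

section
/- Let X be a uniformly locally finite coarse space. For every controlled set T ⊆ X × X with k := sup_x #(T[x]) < ∞ and every function a : T → ℂ bounded by M, the operator A on ℓ²X with matrix coefficients ⟨A δ_y, δ_x⟩ = a(x,y) for (x,y) ∈ T and 0 otherwise is bounded, with operator norm at most M·k (more generally at most M·√(sup_x #T[x] · sup_x #T⁻¹[x])). -/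
open scoped Classical ENNReal

/-- A bounded function supported on a set `T ⊆ X × X` with uniformly finite sections
defines a bounded operator on `ℓ²X`, with norm at most `M·k`. -/
theorem bounded_operator_of_controlled_kernel {X : Type*}
    (T : Set (X × X)) (k : ℕ) (M : ℝ) (hM0 : 0 ≤ M)
    (h₁ : ∀ x : X, {y | (y, x) ∈ T}.Finite ∧ {y | (y, x) ∈ T}.ncard ≤ k)
    (h₂ : ∀ x : X, {y | (x, y) ∈ T}.Finite ∧ {y | (x, y) ∈ T}.ncard ≤ k)
    (a : X × X → ℂ) (ha : ∀ p ∈ T, ‖a p‖ ≤ M) :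
    ∃ A : lp (fun _ : X => ℂ) 2 →L[ℂ] lp (fun _ : X => ℂ) 2,
      (∀ x y : X,
        (A (lp.single 2 y 1) : ∀ _ : X, ℂ) x = if (x, y) ∈ T then a (x, y) else 0) ∧
      ‖A‖ ≤ M * k := by
  classical
  have htr : ((2 : ℝ≥0∞)).toReal = 2 := by norm_num
  have hconv : ∀ r : ℝ, r ^ ((2 : ℝ≥0∞)).toReal = r ^ 2 := fun r => by
    rw [htr, show (2 : ℝ) = ((2 : ℕ) : ℝ) by norm_num, Real.rpow_natCast]
  set row : X → Finset X := fun x => (h₂ x).1.toFinset with hrow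
  set col : X → Finset X := fun y => (h₁ y).1.toFinset with hcol
  have hrowmem : ∀ x y : X, y ∈ row x ↔ (x, y) ∈ T := fun x y => (h₂ x).1.mem_toFinset
  have hcolmem : ∀ y x : X, x ∈ col y ↔ (x, y) ∈ T := fun y x => (h₁ y).1.mem_toFinset
  have hrowcard : ∀ x, (row x).card ≤ k := fun x => by
    have := (h₂ x).2; rwa [Set.ncard_eq_toFinset_card _ (h₂ x).1] at this
  have hcolcard : ∀ y, (col y).card ≤ k := fun y => by
    have := (h₁ y).2; rwa [Set.ncard_eq_toFinset_card _ (h₁ y).1] at this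
  set F : (∀ _ : X, ℂ) → ∀ _ : X, ℂ := fun ξ x => ∑ y ∈ row x, a (x, y) * ξ y with hF
  -- pointwise Cauchy–Schwarz bound
  have hpt : ∀ (ξ : ∀ _ : X, ℂ) (x : X),
      ‖F ξ x‖ ^ 2 ≤ M ^ 2 * k * ∑ y ∈ row x, ‖ξ y‖ ^ 2 := by
    intro ξ x
    have h1 : ‖F ξ x‖ ≤ ∑ y ∈ row x, ‖a (x, y) * ξ y‖ := norm_sum_le _ _
    have h2 : ‖F ξ x‖ ^ 2 ≤ (∑ y ∈ row x, ‖a (x, y) * ξ y‖) ^ 2 :=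
      pow_le_pow_left₀ (norm_nonneg _) h1 2
    have h3 : (∑ y ∈ row x, ‖a (x, y) * ξ y‖) ^ 2 ≤
        (row x).card * ∑ y ∈ row x, ‖a (x, y) * ξ y‖ ^ 2 := sq_sum_le_card_mul_sum_sq
    have h4 : ∑ y ∈ row x, ‖a (x, y) * ξ y‖ ^ 2 ≤ ∑ y ∈ row x, M ^ 2 * ‖ξ y‖ ^ 2 := by
      refine Finset.sum_le_sum fun y hy => ?_
      rw [norm_mul, mul_pow]
      exact mul_le_mul_of_nonneg_right
        (pow_le_pow_left₀ (norm_nonneg _) (ha _ ((hrowmem x y).1 hy)) 2) (by positivity)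
    calc ‖F ξ x‖ ^ 2 ≤ (row x).card * ∑ y ∈ row x, ‖a (x, y) * ξ y‖ ^ 2 := h2.trans h3
      _ ≤ (k : ℝ) * ∑ y ∈ row x, M ^ 2 * ‖ξ y‖ ^ 2 :=
          mul_le_mul (by exact_mod_cast hrowcard x) h4
            (Finset.sum_nonneg fun y _ => by positivity) (by positivity)
      _ = M ^ 2 * k * ∑ y ∈ row x, ‖ξ y‖ ^ 2 := by rw [← Finset.mul_sum]; ring
  -- Schur-type finite-sum bound
  have hsum : ∀ (ξ : lp (fun _ : X => ℂ) 2) (s : Finset X),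
      ∑ x ∈ s, ‖F (ξ : ∀ _ : X, ℂ) x‖ ^ 2 ≤ (M * k * ‖ξ‖) ^ 2 := by
    intro ξ s
    set g : X → ℝ := fun y => ‖(ξ : ∀ _ : X, ℂ) y‖ ^ 2 with hg
    set B := s.biUnion row with hB
    have hdouble : ∑ x ∈ s, ∑ y ∈ row x, g y ≤ (k : ℝ) * ∑ y ∈ B, g y := by
      have hsub : ∀ x ∈ s, row x ⊆ B := fun x hx => Finset.subset_biUnion_of_mem row hx
      calc ∑ x ∈ s, ∑ y ∈ row x, g y
          = ∑ x ∈ s, ∑ y ∈ B, if y ∈ row x then g y else 0 := by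
            refine Finset.sum_congr rfl fun x hx => ?_
            rw [Finset.sum_ite_mem, Finset.inter_eq_right.2 (hsub x hx)]
        _ = ∑ y ∈ B, ∑ x ∈ s, if y ∈ row x then g y else 0 := Finset.sum_comm
        _ ≤ ∑ y ∈ B, (k : ℝ) * g y := by
            refine Finset.sum_le_sum fun y _ => ?_
            rw [Finset.sum_ite, Finset.sum_const, Finset.sum_const_zero, add_zero,
              nsmul_eq_mul]
            have hcardle : (s.filter fun x => y ∈ row x).card ≤ k := by
              refine le_trans (Finset.card_le_card fun x hx => ?_) (hcolcard y)
              rw [Finset.mem_filter] at hx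
              exact (hcolmem y x).2 ((hrowmem x y).1 hx.2)
            exact mul_le_mul_of_nonneg_right (by exact_mod_cast hcardle) (by positivity)
        _ = (k : ℝ) * ∑ y ∈ B, g y := (Finset.mul_sum _ _ _).symm
    have hBsum : ∑ y ∈ B, g y ≤ ‖ξ‖ ^ 2 := by
      have h := lp.sum_rpow_le_norm_rpow (p := 2) (by norm_num [htr]) ξ B
      simp only [hconv] at h
      exact h
    have hstep : ∑ x ∈ s, ‖F (ξ : ∀ _ : X, ℂ) x‖ ^ 2
        ≤ M ^ 2 * k * ∑ x ∈ s, ∑ y ∈ row x, g y := by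
      rw [Finset.mul_sum]
      exact Finset.sum_le_sum fun x _ => hpt _ x
    have h5 : M ^ 2 * k * ∑ x ∈ s, ∑ y ∈ row x, g y
        ≤ M ^ 2 * k * ((k : ℝ) * ‖ξ‖ ^ 2) := by
      refine mul_le_mul_of_nonneg_left (hdouble.trans ?_) (by positivity)
      exact mul_le_mul_of_nonneg_left hBsum (by positivity)
    calc ∑ x ∈ s, ‖F (ξ : ∀ _ : X, ℂ) x‖ ^ 2 ≤ M ^ 2 * k * ((k : ℝ) * ‖ξ‖ ^ 2) :=
          hstep.trans h5
      _ = (M * k * ‖ξ‖) ^ 2 := by ring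
  have hmem : ∀ ξ : lp (fun _ : X => ℂ) 2, Memℓp (F ξ) 2 := fun ξ =>
    memℓp_gen' (C := (M * k * ‖ξ‖) ^ 2) fun s => by
      simp only [hconv]; exact hsum ξ s
  let L : lp (fun _ : X => ℂ) 2 →ₗ[ℂ] lp (fun _ : X => ℂ) 2 :=
    { toFun := fun ξ => ⟨F ξ, hmem ξ⟩
      map_add' := fun ξ η => by
        apply lp.ext
        funext x
        show F (⇑(ξ + η)) x = F ξ x + F η x
        rw [lp.coeFn_add]
        simp [hF, mul_add, Finset.sum_add_distrib]
      map_smul' := fun c ξ => by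
        apply lp.ext
        funext x
        show F (⇑(c • ξ)) x = c • F ξ x
        rw [lp.coeFn_smul]
        simp only [hF, Pi.smul_apply, smul_eq_mul, Finset.mul_sum]
        exact Finset.sum_congr rfl fun y _ => by ring }
  have hLnorm : ∀ ξ, ‖L ξ‖ ≤ M * k * ‖ξ‖ := fun ξ => by
    refine lp.norm_le_of_forall_sum_le (by norm_num [htr]) (by positivity) fun s => ?_
    simp only [hconv]
    exact hsum ξ s
  refine ⟨L.mkContinuous (M * k) hLnorm, ?_, ?_⟩
  · intro x y
    show F (lp.single 2 y 1 : ∀ _ : X, ℂ) x = _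
    have hsingle : ∀ y' : X, (lp.single (E := fun _ : X => ℂ) 2 y (1 : ℂ) : ∀ _ : X, ℂ) y'
        = if y' = y then 1 else 0 := fun y' => by
      rcases eq_or_ne y' y with h | h
      · subst h; simp [lp.single_apply_self]
      · simp [lp.single_apply_ne _ _ _ h, h]
    rw [show F (lp.single 2 y 1 : ∀ _ : X, ℂ) x
        = ∑ y' ∈ row x, a (x, y') * (lp.single 2 y 1 : ∀ _ : X, ℂ) y' from rfl]
    simp only [hsingle, mul_ite, mul_one, mul_zero]
    rw [Finset.sum_ite_eq' (row x) y (fun y' => a (x, y'))]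
    simp [hrowmem]
  · exact L.mkContinuous_norm_le (by positivity) hLnorm
end
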